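/- Chomsky normal form transformation step (empty production elimination): let G be a hyperedge replacement grammar, A ∈ N with A ≠ S, and suppose A has only an empty production among those being eliminated. Replacing, for each production q = (B, X) containing a hyperedge e labelled A and each production q' = (A, Y), the pair (q, q') by the new production (B, X[e/Y]), and deleting A's productions, yields a grammar G' with L(G') = L(G). -/

import Mathlib

/-- A hypergraph over a label set `C`: finite sets of vertices and hyperedges,
an attachment list and a label for each hyperedge, and a duplicate-free list of
external nodes. -/
structure HRGraph (C : Type) : Type 1 where
  V : Type
  E : Type
  finV : Finite V
  finE : Finite E
  att : E → List V
  lab : E → C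
  ext : List V
  ext_nodup : ext.Nodup

namespace HRGraph

variable {C : Type}

/-- The size `|H| = |V_H| + |E_H|` of a hypergraph. -/
noncomputable def size (H : HRGraph C) : ℕ := Nat.card H.V + Nat.card H.E

/-- Replacement `H[e/R]`: remove the hyperedge `e`, disjointly add the vertices and
hyperedges of `R`, and fuse the `i`-th external node of `R` with the `i`-th
attachment node of `e`. -/
noncomputable def replace (H : HRGraph C) (e : H.E) (R : HRGraph C)
    (hlen : R.ext.length = (H.att e).length) : HRGraph C := by
  classical
  exact
    { V := H.V ⊕ {v : R.V // v ∉ R.ext}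
      E := {e' : H.E // e' ≠ e} ⊕ R.E
      finV := by haveI := H.finV; haveI := R.finV; infer_instance
      finE := by haveI := H.finE; haveI := R.finE; infer_instance
      att := fun x =>
        match x with
        | Sum.inl e' => (H.att e'.1).map Sum.inl
        | Sum.inr f => (R.att f).map (fun v =>
            if hv : v ∈ R.ext then
              Sum.inl ((H.att e).get ⟨R.ext.idxOf v, hlen ▸ List.idxOf_lt_length_iff.mpr hv⟩)
            else Sum.inr ⟨v, hv⟩)
      lab := fun x => match x with | Sum.inl e' => H.lab e'.1 | Sum.inr f => R.lab f
      ext := H.ext.map Sum.inl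
      ext_nodup := List.Nodup.map Sum.inl_injective H.ext_nodup }

/-- Isomorphism of hypergraphs. -/
structure Iso (H K : HRGraph C) where
  vEquiv : H.V ≃ K.V
  eEquiv : H.E ≃ K.E
  att_eq : ∀ e, (H.att e).map vEquiv = K.att (eEquiv e)
  lab_eq : ∀ e, H.lab e = K.lab (eEquiv e)
  ext_eq : H.ext.map vEquiv = K.ext

def Iso.refl (H : HRGraph C) : Iso H H :=
  ⟨Equiv.refl _, Equiv.refl _, by simp, by simp, by simp⟩

def Iso.symm {H K : HRGraph C} (i : Iso H K) : Iso K H where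
  vEquiv := i.vEquiv.symm
  eEquiv := i.eEquiv.symm
  att_eq e := by
    have h := i.att_eq (i.eEquiv.symm e)
    simp only [Equiv.apply_symm_apply] at h
    rw [← h, List.map_map]
    simp
  lab_eq e := by
    have h := i.lab_eq (i.eEquiv.symm e)
    simp only [Equiv.apply_symm_apply] at h
    exact h.symm
  ext_eq := by
    rw [← i.ext_eq, List.map_map]
    simp

def Iso.trans {H K L : HRGraph C} (i : Iso H K) (j : Iso K L) : Iso H L where
  vEquiv := i.vEquiv.trans j.vEquiv
  eEquiv := i.eEquiv.trans j.eEquiv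
  att_eq e := by
    simp only [Equiv.coe_trans, ← List.map_map, i.att_eq, j.att_eq]
    rfl
  lab_eq e := (i.lab_eq e).trans (j.lab_eq (i.eEquiv e))
  ext_eq := by
    simp only [Equiv.coe_trans, ← List.map_map, i.ext_eq, j.ext_eq]

/-- Hypergraphs up to isomorphism. -/
def isoSetoid (C : Type) : Setoid (HRGraph C) :=
  ⟨fun H K => Nonempty (Iso H K),
   ⟨fun H => ⟨Iso.refl H⟩, fun ⟨i⟩ => ⟨i.symm⟩, fun ⟨i⟩ ⟨j⟩ => ⟨i.trans j⟩⟩⟩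

/-- The handle `A•` of a label `A` of type `n`: one hyperedge labelled `A`
attached to `n` pairwise distinct nodes, all of them external. -/
def handle (A : C) (n : ℕ) : HRGraph C where
  V := Fin n
  E := PUnit
  finV := inferInstance
  finE := inferInstance
  att _ := List.finRange n
  lab _ := A
  ext := List.finRange n
  ext_nodup := List.nodup_finRange n

/-- `K` is (isomorphic to) the result of replacing `e` by `R` in `H`. -/
def IsRepl (H : HRGraph C) (e : H.E) (R K : HRGraph C) : Prop :=
  ∃ hlen : R.ext.length = (H.att e).length, Nonempty (Iso K (H.replace e R hlen))

/-- A direct derivation step using some production of `P`. -/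
def Step (P : Set (C × HRGraph C)) (H K : HRGraph C) : Prop :=
  ∃ p ∈ P, ∃ e : H.E, H.lab e = p.1 ∧ IsRepl H e p.2 K

/-- Derivations: the reflexive-transitive closure of `Step`. -/
def Derives (P : Set (C × HRGraph C)) : HRGraph C → HRGraph C → Prop :=
  Relation.ReflTransGen (Step P)

/-- All hyperedges of `H` carry terminal labels. -/
def TerminalGraph (Tm : Set C) (H : HRGraph C) : Prop := ∀ e : H.E, H.lab e ∈ Tm

/-- The language generated from the handle of `S` (of type `tyS`). -/
def Lang (P : Set (C × HRGraph C)) (Tm : Set C) (S : C) (tyS : ℕ) :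
    Set (HRGraph C) :=
  {H | Derives P (handle S tyS) H ∧ TerminalGraph Tm H}

end HRGraph
namespace HRGraph

variable {C : Type}

/-- Simultaneous replacement `H[repl]` of the set `B` of hyperedges of `H`:
each `e ∈ B` is removed, the vertices and hyperedges of `repl e` are disjointly
added, and the `i`-th external node of `repl e` is fused with the `i`-th
attachment node of `e`. -/
noncomputable def replaceSet (H : HRGraph C) (B : Set H.E) (repl : H.E → HRGraph C)
    (hlen : ∀ e ∈ B, (repl e).ext.length = (H.att e).length) : HRGraph C := by
  classical
  exact
    { V := H.V ⊕ Σ e : B, {v : (repl e.1).V // v ∉ (repl e.1).ext}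
      E := {e : H.E // e ∉ B} ⊕ Σ e : B, (repl e.1).E
      finV := by
        haveI := H.finV; haveI := H.finE
        haveI : ∀ e : B, Finite {v : (repl e.1).V // v ∉ (repl e.1).ext} := by
          intro e; haveI := (repl e.1).finV; infer_instance
        infer_instance
      finE := by
        haveI := H.finE
        haveI : ∀ e : B, Finite (repl e.1).E := fun e => (repl e.1).finE
        infer_instance
      att := fun x =>
        match x with
        | Sum.inl e' => (H.att e'.1).map Sum.inl
        | Sum.inr ⟨e, f⟩ => ((repl e.1).att f).map (fun v =>
            if hv : v ∈ (repl e.1).ext then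
              Sum.inl ((H.att e.1).get ⟨(repl e.1).ext.idxOf v,
                hlen e.1 e.2 ▸ List.idxOf_lt_length_iff.mpr hv⟩)
            else Sum.inr ⟨e, v, hv⟩)
      lab := fun x =>
        match x with
        | Sum.inl e' => H.lab e'.1
        | Sum.inr ⟨e, f⟩ => (repl e.1).lab f
      ext := H.ext.map Sum.inl
      ext_nodup := List.Nodup.map Sum.inl_injective H.ext_nodup }

end HRGraph

/-!
Every production of `A` is erasing: its right-hand side has no hyperedges and only external
nodes, so applying it just deletes an `A`-hyperedge. A step of the new grammar with
`(B, X[repl])` is therefore simulated by the step with `(B, X)` followed by erasing the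
`A`-hyperedges of `X` one at a time. Conversely, deleting all `A`-hyperedges from every
sentential form of a derivation in the old grammar turns erasing steps into isomorphisms and
every other step with `(B, X)` into a step with `(B, X[repl])`. Suitable `repl` exist because
`A` is a nonterminal, so every `A`-hyperedge of a sentential form is eventually rewritten by a
production of `A` of the right type.
-/

theorem List.idxOf_map_of_injective {α β : Type*} [DecidableEq α] [DecidableEq β]
    {f : α → β} (hf : Function.Injective f) (l : List α) (a : α) :
    (l.map f).idxOf (f a) = l.idxOf a := by
  induction l with
  | nil => rfl
  | cons b t ih => by_cases h : b = a <;> simp [ih, h, hf.eq_iff]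

namespace HRGraph

variable {C : Type}

abbrev delete (H : HRGraph C) (S : Set H.E) : HRGraph C where
  V := H.V
  E := {e : H.E // e ∉ S}
  finV := H.finV
  finE := @Subtype.finite _ H.finE _
  att e := H.att e.1
  lab e := H.lab e.1
  ext := H.ext
  ext_nodup := H.ext_nodup

def deleteLabel (H : HRGraph C) (A : C) : HRGraph C := H.delete {e | H.lab e = A}

def IsErasing (R : HRGraph C) : Prop := IsEmpty R.E ∧ ∀ v : R.V, v ∈ R.ext

theorem Iso.length_att {H K : HRGraph C} (i : Iso H K) (e : H.E) :
    (K.att (i.eEquiv e)).length = (H.att e).length := by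
  rw [← i.att_eq, List.length_map]

def Iso.delete {H K : HRGraph C} (i : Iso H K) {S : Set H.E} {S' : Set K.E}
    (hS : ∀ e, e ∈ S ↔ i.eEquiv e ∈ S') : Iso (H.delete S) (K.delete S') where
  vEquiv := i.vEquiv
  eEquiv := i.eEquiv.subtypeEquiv fun e => not_congr (hS e)
  att_eq e := i.att_eq e.1
  lab_eq e := i.lab_eq e.1
  ext_eq := i.ext_eq

def Iso.deleteLabel {H K : HRGraph C} (i : Iso H K) (A : C) :
    Iso (H.deleteLabel A) (K.deleteLabel A) :=
  i.delete fun e => by simp [i.lab_eq e]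

def deleteIsoSelf (H : HRGraph C) {S : Set H.E} (hS : ∀ e, e ∉ S) : Iso (H.delete S) H where
  vEquiv := Equiv.refl _
  eEquiv := Equiv.subtypeUnivEquiv hS
  att_eq _ := List.map_id _
  lab_eq _ := rfl
  ext_eq := List.map_id _

def deleteLabelIsoSelf (H : HRGraph C) {A : C} (hA : ∀ e, H.lab e ≠ A) :
    Iso (H.deleteLabel A) H :=
  H.deleteIsoSelf hA

def deleteDeleteIso (H : HRGraph C) (S : Set H.E) (S' : Set (H.delete S).E) :
    Iso ((H.delete S).delete S') (H.delete (S ∪ Subtype.val '' S')) where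
  vEquiv := Equiv.refl _
  eEquiv :=
    { toFun x :=
        ⟨x.1.1, fun h => h.elim x.1.2 fun ⟨_, hy, hyx⟩ => x.2 (Subtype.ext hyx ▸ hy)⟩
      invFun y := ⟨⟨y.1, fun h => y.2 (Or.inl h)⟩, fun h => y.2 (Or.inr ⟨_, h, rfl⟩)⟩
      left_inv _ := rfl
      right_inv _ := rfl }
  att_eq _ := List.map_id _
  lab_eq _ := rfl
  ext_eq := List.map_id _

noncomputable def Iso.replaceLeft {H K : HRGraph C} (i : Iso H K) {e : H.E} {e' : K.E}
    (he : i.eEquiv e = e') (R : HRGraph C) (h : R.ext.length = (H.att e).length)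
    (h' : R.ext.length = (K.att e').length) : Iso (H.replace e R h) (K.replace e' R h') := by
  subst he
  exact
  { vEquiv := Equiv.sumCongr i.vEquiv (Equiv.refl _)
    eEquiv := Equiv.sumCongr (i.eEquiv.subtypeEquiv fun _ => i.eEquiv.injective.ne_iff.symm)
      (Equiv.refl _)
    att_eq := by
      unfold replace
      rintro (_ | f)
      · simp [← i.att_eq]
      · simp only [List.map_map]
        refine List.map_congr_left fun v _ => ?_
        by_cases hv : v ∈ R.ext <;> simp [hv, ← i.att_eq e]
    lab_eq := by
      rintro (x | _)
      · exact i.lab_eq x.1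
      · rfl
    ext_eq := by unfold replace; simp [← i.ext_eq] }

noncomputable def Iso.replaceRight {R R' : HRGraph C} (j : Iso R R') (H : HRGraph C) (e : H.E)
    (h : R.ext.length = (H.att e).length) (h' : R'.ext.length = (H.att e).length) :
    Iso (H.replace e R h) (H.replace e R' h') := by
  classical
  have hext : R'.ext = R.ext.map j.vEquiv := j.ext_eq.symm
  have hmem (v : R.V) : v ∈ R.ext ↔ j.vEquiv v ∈ R'.ext := by
    rw [hext, List.mem_map_of_injective j.vEquiv.injective]
  exact
  { vEquiv := Equiv.sumCongr (Equiv.refl _) (j.vEquiv.subtypeEquiv fun v => not_congr (hmem v))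
    eEquiv := Equiv.sumCongr (Equiv.refl _) j.eEquiv
    att_eq := by
      unfold replace
      rintro (_ | f)
      · simp
      · simp only [Equiv.sumCongr_apply, Sum.map_inr, ← j.att_eq f, List.map_map]
        refine List.map_congr_left fun v _ => ?_
        by_cases hv : v ∈ R.ext
        · simp [hv, hext, List.idxOf_map_of_injective j.vEquiv.injective]
        · simp [hv, mt (hmem v).mpr hv]
    lab_eq := by
      rintro (_ | f)
      · rfl
      · exact j.lab_eq f
    ext_eq := by unfold replace; simp }

noncomputable def replaceIsoDelete (H : HRGraph C) (f : H.E) {R : HRGraph C}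
    (hR : R.IsErasing) (hlen : R.ext.length = (H.att f).length) :
    Iso (H.replace f R hlen) (H.delete {f}) := by
  have : IsEmpty {v : R.V // v ∉ R.ext} := ⟨fun v => v.2 (hR.2 v)⟩
  have := hR.1
  exact
  { vEquiv := Equiv.sumEmpty _ _
    eEquiv := (Equiv.sumEmpty _ _).trans
      (Equiv.subtypeEquivRight fun _ => Set.mem_singleton_iff.not.symm)
    att_eq := by
      unfold replace
      rintro (_ | y)
      · simp [Function.comp_def, Equiv.sumEmpty_apply_inl]
      · exact isEmptyElim y
    lab_eq := by
      rintro (_ | y)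
      · rfl
      · exact isEmptyElim y
    ext_eq := by unfold replace; simp [Function.comp_def, Equiv.sumEmpty_apply_inl] }

noncomputable def replaceSetIsoDelete (X : HRGraph C) (B : Set X.E) (repl : X.E → HRGraph C)
    (hlen : ∀ e ∈ B, (repl e).ext.length = (X.att e).length)
    (hrepl : ∀ e ∈ B, (repl e).IsErasing) : Iso (X.replaceSet B repl hlen) (X.delete B) := by
  have : IsEmpty (Σ e : B, {v : (repl e.1).V // v ∉ (repl e.1).ext}) :=
    ⟨fun ⟨e, v, hv⟩ => hv ((hrepl e.1 e.2).2 v)⟩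
  have : IsEmpty (Σ e : B, (repl e.1).E) := ⟨fun ⟨e, f⟩ => (hrepl e.1 e.2).1.elim f⟩
  exact
  { vEquiv := Equiv.sumEmpty _ _
    eEquiv := Equiv.sumEmpty _ _
    att_eq := by
      unfold replaceSet
      rintro (_ | y)
      · simp [Function.comp_def, Equiv.sumEmpty_apply_inl]
      · exact isEmptyElim y
    lab_eq := by
      rintro (_ | y)
      · rfl
      · exact isEmptyElim y
    ext_eq := by unfold replaceSet; simp [Function.comp_def, Equiv.sumEmpty_apply_inl] }

noncomputable def replaceDeleteIso (H : HRGraph C) (e : H.E) (R : HRGraph C)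
    (hlen : R.ext.length = (H.att e).length) {S₁ : Set H.E} (he : e ∉ S₁) (S₂ : Set R.E)
    {S : Set (H.replace e R hlen).E}
    (hS : ∀ x, x ∈ S ↔ Sum.elim (fun e' => e'.1 ∈ S₁) (· ∈ S₂) x) :
    Iso ((H.replace e R hlen).delete S)
      ((H.delete S₁).replace ⟨e, he⟩ (R.delete S₂) hlen) where
  vEquiv := Equiv.refl _
  eEquiv :=
    { toFun
        | ⟨Sum.inl e', hx⟩ => Sum.inl ⟨⟨e'.1, fun h => hx ((hS _).mpr h)⟩,
            fun h => e'.2 (congrArg Subtype.val h)⟩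
        | ⟨Sum.inr f, hx⟩ => Sum.inr ⟨f, fun h => hx ((hS _).mpr h)⟩
      invFun
        | Sum.inl z =>
          ⟨Sum.inl ⟨z.1.1, fun h => z.2 (Subtype.ext h)⟩, fun h => z.1.2 ((hS _).mp h)⟩
        | Sum.inr w => ⟨Sum.inr w.1, fun h => w.2 ((hS _).mp h)⟩
      left_inv := by rintro ⟨_ | _, _⟩ <;> rfl
      right_inv := by rintro (_ | _) <;> rfl }
  att_eq := by unfold replace; rintro ⟨_ | _, _⟩ <;> simp
  lab_eq := by rintro ⟨_ | _, _⟩ <;> rfl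
  ext_eq := by unfold replace; simp

section Derivation

variable {P : Set (C × HRGraph C)} {H H' H₁ K K' : HRGraph C}

theorem IsRepl.exists_edge_of_ne {e : H.E} {R : HRGraph C} (h : IsRepl H e R H₁) (e' : H.E)
    (he' : e' ≠ e) :
    ∃ x : H₁.E, H₁.lab x = H.lab e' ∧ (H₁.att x).length = (H.att e').length := by
  obtain ⟨hlen, ⟨i⟩⟩ := h
  exact ⟨i.symm.eEquiv (Sum.inl ⟨e', he'⟩), (i.symm.lab_eq _).symm,
    (i.symm.length_att _).trans (List.length_map _)⟩

theorem IsRepl.exists_edge_of_rhs {e : H.E} {R : HRGraph C} (h : IsRepl H e R H₁) (f : R.E) :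
    ∃ x : H₁.E, H₁.lab x = R.lab f ∧ (H₁.att x).length = (R.att f).length := by
  obtain ⟨hlen, ⟨i⟩⟩ := h
  exact ⟨i.symm.eEquiv (Sum.inr f), (i.symm.lab_eq _).symm,
    (i.symm.length_att _).trans (List.length_map _)⟩

theorem Step.of_iso_left (i : Iso H H') (h : Step P H K) : Step P H' K := by
  obtain ⟨p, hp, e, he, hlen, ⟨j⟩⟩ := h
  have hlen' : p.2.ext.length = (H'.att (i.eEquiv e)).length := by rw [i.length_att]; exact hlen
  exact ⟨p, hp, i.eEquiv e, i.lab_eq e ▸ he, hlen',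
    ⟨j.trans (i.replaceLeft rfl p.2 hlen hlen')⟩⟩

theorem Step.of_iso_right (h : Step P H K) (i : Iso K' K) : Step P H K' := by
  obtain ⟨p, hp, e, he, hlen, ⟨j⟩⟩ := h
  exact ⟨p, hp, e, he, hlen, ⟨i.trans j⟩⟩

theorem step_delete_of_isErasing {f : H.E} {R : HRGraph C} (hp : (H.lab f, R) ∈ P)
    (hR : R.IsErasing) (hlen : R.ext.length = (H.att f).length) : Step P H (H.delete {f}) :=
  ⟨_, hp, f, rfl, hlen, ⟨(H.replaceIsoDelete f hR hlen).symm⟩⟩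

theorem exists_production_of_derives {Tm : Set C} (hd : Derives P H K)
    (hK : TerminalGraph Tm K) (e : H.E) (he : H.lab e ∉ Tm) :
    ∃ R, (H.lab e, R) ∈ P ∧ R.ext.length = (H.att e).length := by
  induction hd using Relation.ReflTransGen.head_induction_on with
  | refl => exact absurd (hK e) he
  | head hs _ ih =>
    obtain ⟨p, hp, e₀, he₀, hrepl⟩ := hs
    by_cases hee : e = e₀
    · subst hee
      exact ⟨p.2, he₀ ▸ hp, hrepl.1⟩
    · obtain ⟨x, hx, hxl⟩ := hrepl.exists_edge_of_ne e hee
      obtain ⟨R, hR, hRl⟩ := ih x (hx ▸ he)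
      exact ⟨R, hx ▸ hR, hRl.trans hxl⟩

/-- Derivations with zero steps are not closed under isomorphism, while all others are, since
`Step` only determines its target up to isomorphism. -/
def DerivesUpToIso (P : Set (C × HRGraph C)) (H K : HRGraph C) : Prop :=
  Derives P H K ∨ Nonempty (Iso H K)

namespace DerivesUpToIso

theorem of_iso_left (i : Iso H H') : DerivesUpToIso P H K → DerivesUpToIso P H' K
  | .inl h => by
    rcases Relation.ReflTransGen.cases_head h with rfl | ⟨_, hs, ht⟩
    · exact .inr ⟨i.symm⟩
    · exact .inl (.head (hs.of_iso_left i) ht)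
  | .inr ⟨j⟩ => .inr ⟨i.symm.trans j⟩

theorem of_iso_right (i : Iso K K') : DerivesUpToIso P H K → DerivesUpToIso P H K'
  | .inl h => by
    rcases Relation.ReflTransGen.cases_tail h with rfl | ⟨_, ht, hs⟩
    · exact .inr ⟨i⟩
    · exact .inl (.tail ht (hs.of_iso_right i.symm))
  | .inr ⟨j⟩ => .inr ⟨j.trans i⟩

theorem head (hs : Step P H H₁) : DerivesUpToIso P H₁ K → Derives P H K
  | .inl h => .head hs h
  | .inr ⟨j⟩ => .single (hs.of_iso_right j.symm)

theorem tail (hs : Step P K K') : DerivesUpToIso P H K → Derives P H K'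
  | .inl h => .tail h hs
  | .inr ⟨j⟩ => .single (hs.of_iso_left j.symm)

end DerivesUpToIso

theorem derivesUpToIso_delete (S : Set H.E)
    (hS : ∀ f ∈ S, ∃ R, (H.lab f, R) ∈ P ∧ R.IsErasing ∧
      R.ext.length = (H.att f).length) :
    DerivesUpToIso P H (H.delete S) := by
  have := H.finE
  induction S, S.toFinite using Set.Finite.induction_on with
  | empty => exact .inr ⟨(H.deleteIsoSelf fun _ h => h).symm⟩
  | @insert f T hf _ ih =>
    obtain ⟨R, hp, hR, hlen⟩ := hS f (Set.mem_insert f T)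
    have hstep : Step P (H.delete T) ((H.delete T).delete {⟨f, hf⟩}) :=
      step_delete_of_isErasing hp hR hlen
    have hiso : Iso ((H.delete T).delete {⟨f, hf⟩}) (H.delete (insert f T)) :=
      (deleteDeleteIso H T _).trans ((Iso.refl H).delete fun e => by simp [Iso.refl])
    exact .inl (DerivesUpToIso.tail (hstep.of_iso_right hiso.symm)
      (ih fun f' hf' => hS f' (Set.mem_insert_of_mem f hf')))

end Derivation

def inlineProductions (P : Set (C × HRGraph C)) (A : C) : Set (C × HRGraph C) :=
  {q | ∃ (B : C) (X : HRGraph C), (B, X) ∈ P ∧ B ≠ A ∧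
    ∃ (repl : X.E → HRGraph C) (_ : ∀ e : X.E, X.lab e = A → (A, repl e) ∈ P)
      (hlen : ∀ e ∈ {e : X.E | X.lab e = A}, (repl e).ext.length = (X.att e).length),
      q = (B, X.replaceSet {e : X.E | X.lab e = A} repl hlen)}

section Inline

variable {P : Set (C × HRGraph C)} {A : C} {H H₁ K : HRGraph C}

theorem derives_of_step_inlineProductions (hA : ∀ R, (A, R) ∈ P → R.IsErasing)
    (h : Step (inlineProductions P A) H K) : Derives P H K := by
  obtain ⟨_, ⟨B, X, hp, -, repl, hrepl, hlen, rfl⟩, e, he, hlen', ⟨i⟩⟩ := h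
  have hlenX : X.ext.length = (H.att e).length := (List.length_map _).symm.trans hlen'
  let T : Set (H.replace e X hlenX).E :=
    {x | Sum.elim (fun e' => e'.1 ∈ (∅ : Set H.E)) (fun f => X.lab f = A) x}
  have hdel : DerivesUpToIso P (H.replace e X hlenX) ((H.replace e X hlenX).delete T) := by
    refine derivesUpToIso_delete T ?_
    rintro (_ | f) hf
    · exact hf.elim
    · exact ⟨repl f, hf ▸ hrepl f hf, hA _ (hrepl f hf),
        (hlen f hf).trans (List.length_map _).symm⟩
  have hiso : Iso ((H.replace e X hlenX).delete T) K :=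
    (replaceDeleteIso H e X hlenX (Set.notMem_empty e) _ fun _ => Iff.rfl).trans
      (((H.deleteIsoSelf fun _ h => h).replaceLeft rfl _ _ hlenX).trans
        (((replaceSetIsoDelete X _ repl hlen fun f hf => hA _ (hrepl f hf)).symm.replaceRight
          H e _ hlen').trans i.symm))
  exact DerivesUpToIso.head ⟨(B, X), hp, e, he, hlenX, ⟨Iso.refl _⟩⟩
    (hdel.of_iso_right hiso)

theorem derives_of_derives_inlineProductions (hA : ∀ R, (A, R) ∈ P → R.IsErasing)
    (h : Derives (inlineProductions P A) H K) : Derives P H K := by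
  induction h with
  | refl => exact .refl
  | tail _ hs ih => exact ih.trans (derives_of_step_inlineProductions hA hs)

theorem IsRepl.nonempty_iso_deleteLabel_of_isErasing {e : H.E} {R : HRGraph C}
    (he : H.lab e = A) (hR : R.IsErasing) (h : IsRepl H e R H₁) :
    Nonempty (Iso (H₁.deleteLabel A) (H.deleteLabel A)) := by
  obtain ⟨hlen, ⟨i⟩⟩ := h
  refine ⟨((i.trans (H.replaceIsoDelete e hR hlen)).deleteLabel A).trans
    ((deleteDeleteIso H {e} _).trans ((Iso.refl H).delete fun e' => ?_))⟩
  by_cases h : e' = e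
  · subst h
    simp [Iso.refl, he]
  · simp [Iso.refl, h]

theorem IsRepl.step_inlineProductions_deleteLabel {Tm : Set C}
    (hA : ∀ R, (A, R) ∈ P → R.IsErasing) (hATm : A ∉ Tm) {B : C} {X : HRGraph C}
    (hp : (B, X) ∈ P) (hB : B ≠ A) {e : H.E} (he : H.lab e = B) (h : IsRepl H e X H₁)
    (hd : Derives P H₁ K) (hK : TerminalGraph Tm K) :
    Step (inlineProductions P A) (H.deleteLabel A) (H₁.deleteLabel A) := by
  have hX (f : X.E) (hf : X.lab f = A) :
      ∃ R, (A, R) ∈ P ∧ R.ext.length = (X.att f).length := by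
    obtain ⟨x, hx, hxl⟩ := h.exists_edge_of_rhs f
    obtain ⟨R, hR, hRl⟩ := exists_production_of_derives hd hK x (by rwa [hx, hf])
    exact ⟨R, by rwa [hx, hf] at hR, hRl.trans hxl⟩
  have : Nonempty (HRGraph C) := ⟨X⟩
  choose! repl hrepl hlenR using hX
  obtain ⟨hlen, ⟨i⟩⟩ := h
  have he' : e ∉ {e' | H.lab e' = A} := fun h => hB (he.symm.trans h)
  have hlen' : (X.replaceSet {f | X.lab f = A} repl hlenR).ext.length =
      ((H.deleteLabel A).att ⟨e, he'⟩).length := (List.length_map _).trans hlen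
  refine ⟨_, ⟨B, X, hp, hB, repl, hrepl, hlenR, rfl⟩, ⟨e, he'⟩, he, hlen', ⟨?_⟩⟩
  exact (i.deleteLabel A).trans
    ((replaceDeleteIso H e X hlen he' _ fun x => by cases x <;> rfl).trans
      ((replaceSetIsoDelete X _ repl hlenR fun f hf => hA _ (hrepl f hf)).symm.replaceRight ..))

theorem derivesUpToIso_deleteLabel {Tm : Set C} (hA : ∀ R, (A, R) ∈ P → R.IsErasing)
    (hATm : A ∉ Tm) (hd : Derives P H K) (hK : TerminalGraph Tm K) :
    DerivesUpToIso (inlineProductions P A) (H.deleteLabel A) K := by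
  induction hd using Relation.ReflTransGen.head_induction_on with
  | refl => exact .inr ⟨K.deleteLabelIsoSelf fun e he => hATm (he ▸ hK e)⟩
  | head hs hd ih =>
    obtain ⟨⟨B, X⟩, hp, e, he, hrepl⟩ := hs
    by_cases hB : B = A
    · subst hB
      obtain ⟨i⟩ := hrepl.nonempty_iso_deleteLabel_of_isErasing he (hA X hp)
      exact ih.of_iso_left i
    · exact .inl (DerivesUpToIso.head
        (hrepl.step_inlineProductions_deleteLabel hA hATm hp hB he hd hK) ih)

end Inline

end HRGraph

open HRGraph

/-- Chomsky normal form transformation step (empty production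
elimination): let `A ≠ S` be a non-terminal all of whose productions are empty
(no hyperedges, all nodes external).  Replacing every production `q = (B, X)`
(with `B ≠ A`) by the productions obtained by substituting, for each hyperedge
of `X` labelled `A`, the right-hand side of one of `A`'s productions, and
deleting `A`'s productions, yields a grammar generating the same language. -/
theorem empty_production_elimination {C : Type} (Tm : Set C)
    (P : Set (C × HRGraph C)) (S A : C) (tyS : ℕ)
    (hAS : A ≠ S) (hATm : A ∉ Tm)
    (hAempty : ∀ R : HRGraph C, (A, R) ∈ P →
      IsEmpty R.E ∧ (∀ v : R.V, v ∈ R.ext)) :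
    HRGraph.Lang
      {q | ∃ (B : C) (X : HRGraph C), (B, X) ∈ P ∧ B ≠ A ∧
        ∃ (repl : X.E → HRGraph C)
          (hrepl : ∀ e : X.E, X.lab e = A → (A, repl e) ∈ P)
          (hlen : ∀ e ∈ {e : X.E | X.lab e = A},
            (repl e).ext.length = (X.att e).length),
          q = (B, X.replaceSet {e : X.E | X.lab e = A} repl hlen)}
      Tm S tyS
      = HRGraph.Lang P Tm S tyS := by
  change Lang (inlineProductions P A) Tm S tyS = Lang P Tm S tyS
  ext K
  refine ⟨fun ⟨hd, hK⟩ => ⟨derives_of_derives_inlineProductions hAempty hd, hK⟩,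
    fun ⟨hd, hK⟩ => ⟨?_, hK⟩⟩
  rcases Relation.ReflTransGen.cases_head hd with
    rfl | ⟨H₁, ⟨⟨B, X⟩, hp, e, he, hrepl⟩, hd₁⟩
  · exact .refl
  -- The first step rewrites the `S`-hyperedge of the handle, so it survives the deletion of
  -- `A`-hyperedges as a genuine step; this excludes the isomorphism case of `DerivesUpToIso`.
  have hB : B ≠ A := fun h => hAS (h ▸ he).symm
  have hstep := hrepl.step_inlineProductions_deleteLabel hAempty hATm hp hB he hd₁ hK
  exact DerivesUpToIso.head
    (hstep.of_iso_left ((handle S tyS).deleteLabelIsoSelf fun _ h => hAS h.symm))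
    (derivesUpToIso_deleteLabel hAempty hATm hd₁ hK)
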